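/- Let D be a DAG on V = {1,...,d} with reachability matrix R (R_{ji} = 1 iff j ∈ An(i)), and let χ be a symmetric d×d matrix with ones on the diagonal. For i ∈ V define recursively b̄_{ii} := 1 − ∑_{k∈an(i)} b̄_{kk} χ(k,i). Suppose: (a) sgn(χ) = sgn(RᵀR); (b) b̄_{ii} > 0 for all i; (c) χ(j,i) = χ(j,k)χ(k,i) for all i ∈ V, j ∈ an(i), k ∈ de(j) ∩ pa(i); (d) χ(i,j) = ∑_{k ∈ An(i)∩An(j)} b̄_{kk} · min(χ(k,i), χ(k,j)) for all i,j with i ∉ An(j), j ∉ An(i), An(i)∩An(j) ≠ ∅. Then the matrix B̄ defined by b̄_{ji} := b̄_{jj} χ(j,i) for j ∈ an(i), b̄_{ji} := 0 for j ∉ An(i), together with the diagonal entries b̄_{ii}, is a standardized max-linear coefficient matrix of a recursive max-weighted model on D whose tail dependence matrix is χ. -/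

import Mathlib

open Finset
open scoped Classical

/-- `anc E j i`: there is a directed path (length ≥ 1) from `j` to `i`, i.e. `j` is a
strict ancestor of `i` in the directed graph with edge relation `E`. -/
def anc {d : ℕ} (E : Fin d → Fin d → Prop) (j i : Fin d) : Prop :=
  Relation.TransGen E j i

/-- `Anc E j i`: `j` is an ancestor of `i`, including `j = i`. -/
def Anc {d : ℕ} (E : Fin d → Fin d → Prop) (j i : Fin d) : Prop :=
  j = i ∨ Relation.TransGen E j i

/-- The tail dependence coefficient associated to a (standardized) max-linear
coefficient matrix `B`: `χ(i,j) = ∑_{k ∈ An(i) ∩ An(j)} min (B k i) (B k j)`. -/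
noncomputable def tdc {d : ℕ} (E : Fin d → Fin d → Prop)
    (B : Matrix (Fin d) (Fin d) ℝ) (i j : Fin d) : ℝ :=
  ∑ k ∈ Finset.univ.filter (fun k => Anc E k i ∧ Anc E k j), min (B k i) (B k j)

/-!
On each column, `b̄_{ki} = b̄_{kk} χ(k,i)` and the recursion for `b̄_{ii}` say exactly that the
column of `B̄` sums to one. Hypothesis (c) propagates along paths to `χ(j,i) = χ(j,k) χ(k,i)`
for `j → k → i`, which is the max-weighted property. When `i ∈ An(j)` this factorisation gives
`b̄_{kj} = b̄_{ki} χ(i,j)` with `χ(i,j) ≤ 1`, so the tail dependence coefficient collapses to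
`χ(i,j) ∑_{k ∈ An(i)} b̄_{ki} = χ(i,j)`; for incomparable `i, j` it is hypothesis (d), and
without common ancestors both sides vanish.
-/

section Ancestry

variable {d : ℕ} {E : Fin d → Fin d → Prop}

theorem Anc.trans {a b c : Fin d} (hab : Anc E a b) (hbc : Anc E b c) : Anc E a c := by
  rcases hab with rfl | hab
  · exact hbc
  rcases hbc with rfl | hbc
  · exact Or.inr hab
  · exact Or.inr (hab.trans hbc)

theorem Anc.anc_of_ne {j i : Fin d} (h : Anc E j i) (hne : j ≠ i) : anc E j i :=
  h.resolve_left hne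

end Ancestry

namespace MaxLinear

variable {d : ℕ} {E : Fin d → Fin d → Prop}

theorem sum_filter_Anc (hacyc : ∀ i, ¬ anc E i i) (i : Fin d) (f : Fin d → ℝ) :
    ∑ k ∈ univ.filter (fun k => Anc E k i), f k
      = f i + ∑ k ∈ univ.filter (fun k => anc E k i), f k := by
  have hsplit : univ.filter (fun k => Anc E k i) = insert i (univ.filter (fun k => anc E k i)) := by
    ext k
    simp only [mem_filter, mem_univ, true_and, mem_insert]
    rfl
  rw [hsplit, sum_insert (by simpa using hacyc i)]

variable {chi : Fin d → Fin d → ℝ} {bdiag : Fin d → ℝ}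

theorem sum_Anc_bdiag_mul_chi (hacyc : ∀ i, ¬ anc E i i) (hdiag : ∀ i, chi i i = 1)
    (hbdiag : ∀ i, bdiag i =
      1 - ∑ k ∈ univ.filter (fun k => anc E k i), bdiag k * chi k i) (i : Fin d) :
    ∑ k ∈ univ.filter (fun k => Anc E k i), bdiag k * chi k i = 1 := by
  rw [sum_filter_Anc hacyc, hdiag, mul_one, hbdiag i]
  ring

theorem chi_eq_mul_of_anc
    (hc : ∀ i j k, anc E j i → anc E j k → E k i → chi j i = chi j k * chi k i)
    {j k i : Fin d} (hjk : anc E j k) (hki : anc E k i) : chi j i = chi j k * chi k i := by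
  induction hki with
  | single hki => exact hc _ _ _ (hjk.tail hki) hjk hki
  | @tail m i hkm hmi ih =>
    rw [hc i j m (hjk.trans (hkm.tail hmi)) (hjk.trans hkm) hmi,
      hc i k m (hkm.tail hmi) hkm hmi, ih, mul_assoc]

theorem chi_eq_mul_of_Anc (hdiag : ∀ i, chi i i = 1)
    (hc : ∀ i j k, anc E j i → anc E j k → E k i → chi j i = chi j k * chi k i)
    {j k i : Fin d} (hjk : Anc E j k) (hki : Anc E k i) : chi j i = chi j k * chi k i := by
  rcases hjk with rfl | hjk
  · rw [hdiag, one_mul]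
  rcases hki with rfl | hki
  · rw [hdiag, mul_one]
  · exact chi_eq_mul_of_anc hc hjk hki

theorem chi_lt_one_of_anc (hacyc : ∀ i, ¬ anc E i i) (hdiag : ∀ i, chi i i = 1)
    (hbdiag : ∀ i, bdiag i =
      1 - ∑ k ∈ univ.filter (fun k => anc E k i), bdiag k * chi k i)
    (hb : ∀ i, 0 < bdiag i) (hpos : ∀ j i, Anc E j i → 0 < chi j i)
    (hc : ∀ i j k, anc E j i → anc E j k → E k i → chi j i = chi j k * chi k i)
    {i j : Fin d} (hij : anc E i j) : chi i j < 1 := by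
  have hfactor : chi i j = ∑ k ∈ univ.filter (fun k => Anc E k i), bdiag k * chi k j := by
    rw [← one_mul (chi i j), ← sum_Anc_bdiag_mul_chi hacyc hdiag hbdiag i, sum_mul]
    refine sum_congr rfl fun k hk => ?_
    rw [chi_eq_mul_of_Anc hdiag hc (mem_filter.1 hk).2 (Or.inr hij), mul_assoc]
  have hsub : univ.filter (fun k => Anc E k i) ⊆ univ.filter (fun k => anc E k j) := by
    intro k hk
    simp only [mem_filter, mem_univ, true_and] at hk ⊢
    rcases hk with rfl | hki
    · exact hij
    · exact hki.trans hij
  have hle : chi i j ≤ ∑ k ∈ univ.filter (fun k => anc E k j), bdiag k * chi k j := by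
    rw [hfactor]
    refine sum_le_sum_of_subset_of_nonneg hsub fun k hk _ => ?_
    exact (mul_pos (hb k) (hpos k j (Or.inr (mem_filter.1 hk).2))).le
  linarith [hbdiag j, hb j]

theorem chi_le_one_of_Anc (hacyc : ∀ i, ¬ anc E i i) (hdiag : ∀ i, chi i i = 1)
    (hbdiag : ∀ i, bdiag i =
      1 - ∑ k ∈ univ.filter (fun k => anc E k i), bdiag k * chi k i)
    (hb : ∀ i, 0 < bdiag i) (hpos : ∀ j i, Anc E j i → 0 < chi j i)
    (hc : ∀ i j k, anc E j i → anc E j k → E k i → chi j i = chi j k * chi k i)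
    {i j : Fin d} (hij : Anc E i j) : chi i j ≤ 1 := by
  rcases hij with rfl | hij
  · exact (hdiag i).le
  · exact (chi_lt_one_of_anc hacyc hdiag hbdiag hb hpos hc hij).le

variable (E chi bdiag) in
noncomputable def coeffMatrix : Matrix (Fin d) (Fin d) ℝ := fun j i =>
  if j = i then bdiag i else if anc E j i then bdiag j * chi j i else 0

theorem coeffMatrix_of_Anc (hdiag : ∀ i, chi i i = 1) {k i : Fin d} (h : Anc E k i) :
    coeffMatrix E chi bdiag k i = bdiag k * chi k i := by
  unfold coeffMatrix
  split_ifs with hki hanc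
  · subst hki
    rw [hdiag, mul_one]
  · rfl
  · exact absurd (h.anc_of_ne hki) hanc

theorem coeffMatrix_of_not_Anc {k i : Fin d} (h : ¬ Anc E k i) :
    coeffMatrix E chi bdiag k i = 0 := by
  unfold coeffMatrix
  rw [if_neg fun hki => h (Or.inl hki), if_neg fun hki : anc E k i => h (Or.inr hki)]

theorem coeffMatrix_self (k : Fin d) : coeffMatrix E chi bdiag k k = bdiag k := if_pos rfl

theorem coeffMatrix_pos_iff (hdiag : ∀ i, chi i i = 1) (hb : ∀ i, 0 < bdiag i)
    (hpos : ∀ j i, Anc E j i → 0 < chi j i) (j i : Fin d) :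
    0 < coeffMatrix E chi bdiag j i ↔ Anc E j i := by
  refine ⟨fun h => ?_, fun h => ?_⟩
  · by_contra hji
    rw [coeffMatrix_of_not_Anc hji] at h
    exact h.false
  · rw [coeffMatrix_of_Anc hdiag h]
    exact mul_pos (hb j) (hpos j i h)

theorem coeffMatrix_nonneg (hdiag : ∀ i, chi i i = 1) (hb : ∀ i, 0 < bdiag i)
    (hpos : ∀ j i, Anc E j i → 0 < chi j i) (j i : Fin d) :
    0 ≤ coeffMatrix E chi bdiag j i := by
  by_cases h : Anc E j i
  · exact ((coeffMatrix_pos_iff hdiag hb hpos j i).2 h).le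
  · exact (coeffMatrix_of_not_Anc h).ge

theorem sum_Anc_coeffMatrix (hacyc : ∀ i, ¬ anc E i i) (hdiag : ∀ i, chi i i = 1)
    (hbdiag : ∀ i, bdiag i =
      1 - ∑ k ∈ univ.filter (fun k => anc E k i), bdiag k * chi k i) (i : Fin d) :
    ∑ k ∈ univ.filter (fun k => Anc E k i), coeffMatrix E chi bdiag k i = 1 := by
  rw [sum_congr rfl fun k hk => coeffMatrix_of_Anc hdiag (mem_filter.1 hk).2]
  exact sum_Anc_bdiag_mul_chi hacyc hdiag hbdiag i

theorem coeffMatrix_maxWeighted (hdiag : ∀ i, chi i i = 1) (hb : ∀ i, 0 < bdiag i)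
    (hc : ∀ i j k, anc E j i → anc E j k → E k i → chi j i = chi j k * chi k i)
    {i k j : Fin d} (hki : anc E k i) (hjk : anc E j k) :
    coeffMatrix E chi bdiag j i
      = coeffMatrix E chi bdiag j k * coeffMatrix E chi bdiag k i
        / coeffMatrix E chi bdiag k k := by
  rw [coeffMatrix_of_Anc hdiag (Or.inr (hjk.trans hki)), coeffMatrix_of_Anc hdiag (Or.inr hjk),
    coeffMatrix_of_Anc hdiag (Or.inr hki), coeffMatrix_self, chi_eq_mul_of_anc hc hjk hki]
  field_simp [(hb k).ne']

theorem tdc_comm (B : Matrix (Fin d) (Fin d) ℝ) (i j : Fin d) : tdc E B i j = tdc E B j i := by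
  unfold tdc
  simp only [and_comm, min_comm]

theorem tdc_eq_zero {B : Matrix (Fin d) (Fin d) ℝ} {i j : Fin d}
    (h : ¬ ∃ k, Anc E k i ∧ Anc E k j) : tdc E B i j = 0 := by
  unfold tdc
  rw [filter_false_of_mem fun k _ hk => h ⟨k, hk⟩, sum_empty]

theorem tdc_coeffMatrix_of_Anc (hacyc : ∀ i, ¬ anc E i i) (hdiag : ∀ i, chi i i = 1)
    (hbdiag : ∀ i, bdiag i =
      1 - ∑ k ∈ univ.filter (fun k => anc E k i), bdiag k * chi k i)
    (hb : ∀ i, 0 < bdiag i) (hpos : ∀ j i, Anc E j i → 0 < chi j i)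
    (hc : ∀ i j k, anc E j i → anc E j k → E k i → chi j i = chi j k * chi k i)
    {i j : Fin d} (hij : Anc E i j) : tdc E (coeffMatrix E chi bdiag) i j = chi i j := by
  have hset : univ.filter (fun k => Anc E k i ∧ Anc E k j) = univ.filter (fun k => Anc E k i) :=
    filter_congr fun k _ => ⟨And.left, fun hki => ⟨hki, hki.trans hij⟩⟩
  have hterm : ∀ k ∈ univ.filter (fun k => Anc E k i),
      min (coeffMatrix E chi bdiag k i) (coeffMatrix E chi bdiag k j)
        = coeffMatrix E chi bdiag k i * chi i j := by
    intro k hk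
    have hki := (mem_filter.1 hk).2
    have hBkj : coeffMatrix E chi bdiag k j = coeffMatrix E chi bdiag k i * chi i j := by
      rw [coeffMatrix_of_Anc hdiag (hki.trans hij), coeffMatrix_of_Anc hdiag hki,
        chi_eq_mul_of_Anc hdiag hc hki hij, mul_assoc]
    rw [hBkj, min_eq_right (mul_le_of_le_one_right (coeffMatrix_nonneg hdiag hb hpos k i)
      (chi_le_one_of_Anc hacyc hdiag hbdiag hb hpos hc hij))]
  unfold tdc
  rw [hset, sum_congr rfl hterm, ← sum_mul, sum_Anc_coeffMatrix hacyc hdiag hbdiag, one_mul]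

theorem tdc_coeffMatrix (hdiag : ∀ i, chi i i = 1) (hb : ∀ i, 0 < bdiag i) (i j : Fin d) :
    tdc E (coeffMatrix E chi bdiag) i j
      = ∑ k ∈ univ.filter (fun k => Anc E k i ∧ Anc E k j), bdiag k * min (chi k i) (chi k j) := by
  refine sum_congr rfl fun k hk => ?_
  obtain ⟨hki, hkj⟩ := (mem_filter.1 hk).2
  rw [coeffMatrix_of_Anc hdiag hki, coeffMatrix_of_Anc hdiag hkj, mul_min_of_nonneg _ _ (hb k).le]

end MaxLinear

open MaxLinear in
theorem stmt13 {d : ℕ} (E : Fin d → Fin d → Prop)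
    (hacyc : ∀ i, ¬ anc E i i)
    (chi : Fin d → Fin d → ℝ)
    (hsymm : ∀ i j, chi i j = chi j i)
    (hdiag : ∀ i, chi i i = 1)
    (bdiag : Fin d → ℝ)
    (hbdiag : ∀ i, bdiag i =
      1 - ∑ k ∈ Finset.univ.filter (fun k => anc E k i), bdiag k * chi k i)
    (ha : ∀ i j, (0 < chi i j ↔ ∃ k, Anc E k i ∧ Anc E k j) ∧
      (chi i j = 0 ↔ ¬ ∃ k, Anc E k i ∧ Anc E k j))
    (hb : ∀ i, 0 < bdiag i)
    (hc : ∀ i j k, anc E j i → anc E j k → E k i → chi j i = chi j k * chi k i)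
    (hd : ∀ i j, ¬ Anc E i j → ¬ Anc E j i → (∃ k, Anc E k i ∧ Anc E k j) →
      chi i j = ∑ k ∈ Finset.univ.filter (fun k => Anc E k i ∧ Anc E k j),
        bdiag k * min (chi k i) (chi k j)) :
    ∀ Bm : Matrix (Fin d) (Fin d) ℝ,
      (∀ j i, Bm j i = if j = i then bdiag i
        else if anc E j i then bdiag j * chi j i else 0) →
      (∀ j i, 0 ≤ Bm j i) ∧
      (∀ j i, 0 < Bm j i ↔ Anc E j i) ∧
      (∀ i, ∑ k ∈ Finset.univ.filter (fun k => Anc E k i), Bm k i = 1) ∧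
      (∀ i k j, anc E k i → anc E j k → Bm j i = Bm j k * Bm k i / Bm k k) ∧
      (∀ i j, chi i j = tdc E Bm i j) := by
  intro Bm hBm
  obtain rfl : Bm = coeffMatrix E chi bdiag := Matrix.ext hBm
  have hpos : ∀ j i, Anc E j i → 0 < chi j i := fun j i h => (ha j i).1.2 ⟨j, Or.inl rfl, h⟩
  refine ⟨coeffMatrix_nonneg hdiag hb hpos, coeffMatrix_pos_iff hdiag hb hpos,
    sum_Anc_coeffMatrix hacyc hdiag hbdiag,
    fun i k j hki hjk => coeffMatrix_maxWeighted hdiag hb hc hki hjk, fun i j => ?_⟩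
  by_cases hij : Anc E i j
  · exact (tdc_coeffMatrix_of_Anc hacyc hdiag hbdiag hb hpos hc hij).symm
  by_cases hji : Anc E j i
  · rw [hsymm, tdc_comm, tdc_coeffMatrix_of_Anc hacyc hdiag hbdiag hb hpos hc hji]
  by_cases hcommon : ∃ k, Anc E k i ∧ Anc E k j
  · rw [hd i j hij hji hcommon, tdc_coeffMatrix hdiag hb]
  · rw [(ha i j).2.2 hcommon, tdc_eq_zero hcommon]
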